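/- Let T be a triangulation of a convex polygon π with n ≥ 4 vertices and let v be a vertex of π incident to exactly n−3−k interior edges of T. Let U be a triangulation in Ω(T,v) and let a_1, …, a_k be a shelling of T at v such that for each i with 1 ≤ i ≤ k, the vertex a_i is incident to at least two interior edges of U whose other endpoint is not among a_i, …, a_k. If x is equal to a_k or to the vertex of π that immediately precedes a_k clockwise, then U∖x belongs to Ω(T∖x, v). -/

import Mathlib

/-!
Combinatorial model of a convex polygon with `n` vertices, labeled by `Fin n`
in clockwise cyclic order.
-/

/-- `c` lies strictly inside the clockwise arc going from `a` to `b`. -/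
def Between (n : ℕ) (a c b : Fin n) : Prop :=
  0 < (c - a).val ∧ (c - a).val < (b - a).val

/-- Two edges on the polygon cross: their endpoints strictly interleave
in the clockwise cyclic order. -/
def Cross (n : ℕ) (e f : Finset (Fin n)) : Prop :=
  ∃ a b c d : Fin n, e = {a, b} ∧ f = {c, d} ∧ Between n a c b ∧ Between n b d a

/-- The vertex immediately following `i` clockwise. -/
def nextV (n : ℕ) (i : Fin n) : Fin n :=
  ⟨(i.val + 1) % n, Nat.mod_lt _ i.pos⟩

/-- Boundary edges of the polygon: the pairs of cyclically consecutive vertices. -/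
def IsBoundary (n : ℕ) (e : Finset (Fin n)) : Prop :=
  ∃ i : Fin n, e = {i, nextV n i}

/-- `E` is a triangulation of the convex (sub)polygon on the vertex set `W`:
an inclusion-maximal set of pairwise non-crossing edges on `W`. -/
def IsTriangulationOn (n : ℕ) (W : Finset (Fin n)) (E : Finset (Finset (Fin n))) : Prop :=
  (∀ e ∈ E, e ⊆ W) ∧ (∀ e ∈ E, e.card = 2) ∧
    (∀ e ∈ E, ∀ f ∈ E, ¬ Cross n e f) ∧
    (∀ e : Finset (Fin n), e ⊆ W → e.card = 2 → (∀ f ∈ E, ¬ Cross n e f) → e ∈ E)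

/-- A triangulation of the convex polygon with `n` vertices. -/
structure Triangulation (n : ℕ) where
  edges : Finset (Finset (Fin n))
  isTri : IsTriangulationOn n Finset.univ edges

theorem Triangulation.edges_injective (n : ℕ) :
    Function.Injective (Triangulation.edges (n := n)) := by
  rintro ⟨e, he⟩ ⟨f, hf⟩ h
  dsimp at h
  subst h
  rfl

/-- The flip-graph of the polygon: two triangulations are adjacent exactly when
they differ by a single edge. -/
def flipGraph (n : ℕ) : SimpleGraph (Triangulation n) where
  Adj T U := T ≠ U ∧ (T.edges \ U.edges).card = 1 ∧ (U.edges \ T.edges).card = 1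
  symm := ⟨fun T U h => ⟨h.1.symm, h.2.2, h.2.1⟩⟩
  loopless := ⟨fun T h => h.1 rfl⟩

noncomputable instance (n : ℕ) : Fintype (Triangulation n) :=
  Fintype.ofInjective Triangulation.edges (Triangulation.edges_injective n)

open Classical in
/-- The number of interior edges of `T` incident to the vertex `v`. -/
noncomputable def interiorDeg (n : ℕ) (T : Triangulation n) (v : Fin n) : ℕ :=
  (T.edges.filter fun e => v ∈ e ∧ ¬ IsBoundary n e).card

/-- `T` has an ear in `v`: no interior edge of `T` is incident to `v`. -/
def HasEar (n : ℕ) (T : Triangulation n) (v : Fin n) : Prop :=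
  ∀ e ∈ T.edges, ¬ IsBoundary n e → v ∉ e

/-- The eccentricity of `T` in the flip-graph: the maximum of `d(T,U)` over all
triangulations `U`. -/
noncomputable def eccentricity (n : ℕ) (T : Triangulation n) : ℕ :=
  Finset.univ.sup fun U : Triangulation n => (flipGraph n).dist T U

/-- The monotone relabeling of the vertices of the polygon after the deletion of
the vertex `a`. -/
def collapse (n : ℕ) (a v : Fin (n + 2)) : Fin (n + 1) :=
  ⟨if v.val < a.val then v.val else v.val - 1, by
    have := v.isLt; have := a.isLt; split <;> omega⟩

/-- The edge set of the triangulation `T∖a` obtained by deleting the vertex `a` from a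
triangulation with edge set `E`: remove the boundary edge `{a, a+1}`, replace `a` by
`a+1` in every remaining edge, and relabel the remaining vertices monotonically. -/
def deleteEdges (n : ℕ) (a : Fin (n + 2)) (E : Finset (Finset (Fin (n + 2)))) :
    Finset (Finset (Fin (n + 1))) :=
  (E.erase {a, a + 1}).image fun e =>
    e.image fun v => collapse n a (if v = a then a + 1 else v)

/-- `c` is an apex of a triangle of `X` on the boundary edge `{a,b}`. -/
def ApexOf (n : ℕ) (X : Triangulation n) (a b c : Fin n) : Prop :=
  c ≠ a ∧ c ≠ b ∧ ({a, c} : Finset (Fin n)) ∈ X.edges ∧ ({b, c} : Finset (Fin n)) ∈ X.edges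

/-- The flip between the adjacent triangulations `X` and `Y` is incident to `{a,b}`:
it affects the triangle containing `{a,b}`. -/
def FlipIncident (n : ℕ) (X Y : Triangulation n) (a b : Fin n) : Prop :=
  ∃ c : Fin n, (ApexOf n X a b c ∧ ¬ ApexOf n Y a b c) ∨
    (ApexOf n Y a b c ∧ ¬ ApexOf n X a b c)

open Classical in
/-- The number of flips incident to `{a,b}` along the walk `p` in the flip-graph. -/
noncomputable def flipsIncident {n : ℕ} {T U : Triangulation n}
    (p : (flipGraph n).Walk T U) (a b : Fin n) : ℕ :=
  (p.darts.filter fun d => decide (FlipIncident n d.toProd.1 d.toProd.2 a b)).length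

open Classical in
/-- `a 0, …, a (k-1)` is a shelling of `T` at `v`: an ordering of the vertices not
joined to `v` by an edge of `T` such that, for every `i`, the edges of `T` incident
to none of `a i, …, a (k-1)` form a triangulation of a convex polygon. -/
def IsShelling (n k : ℕ) (T : Triangulation n) (v : Fin n) (a : Fin k → Fin n) : Prop :=
  Function.Injective a ∧
    (∀ w : Fin n, (∃ i, a i = w) ↔ w ≠ v ∧ ({v, w} : Finset (Fin n)) ∉ T.edges) ∧
    ∀ i : Fin k,
      IsTriangulationOn n (Finset.univ.filter fun w => ∀ j, i ≤ j → w ≠ a j)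
        (T.edges.filter fun e => ∀ j, i ≤ j → a j ∉ e)

/-- `a i` is incident to at least two interior edges of `U` whose other vertex is not
among `a i, …, a (k-1)`. -/
def GoodAt (n k : ℕ) (U : Triangulation n) (a : Fin k → Fin n) (i : Fin k) : Prop :=
  ∃ e₁ e₂ : Finset (Fin n), e₁ ∈ U.edges ∧ e₂ ∈ U.edges ∧ e₁ ≠ e₂ ∧
    ¬ IsBoundary n e₁ ∧ ¬ IsBoundary n e₂ ∧ a i ∈ e₁ ∧ a i ∈ e₂ ∧
    (∀ w ∈ e₁, w ≠ a i → ∀ j, i ≤ j → w ≠ a j) ∧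
    (∀ w ∈ e₂, w ≠ a i → ∀ j, i ≤ j → w ≠ a j)

/-- The set `Ω(T,v)`: triangulations `U` with an ear in `v` such that, for some
shelling `a` of `T` at `v`, every `a i` is incident to at least two interior edges of
`U` whose other vertex is not among `a i, …, a (k-1)`. -/
def Omega (n k : ℕ) (T : Triangulation n) (v : Fin n) : Set (Triangulation n) :=
  {U | HasEar n U v ∧ ∃ a : Fin k → Fin n, IsShelling n k T v a ∧ ∀ i, GoodAt n k U a i}

/-- The set `Ω̃(T,a,b)`: triangulations `U` such that every interior edge shared by `T`
and `U` is incident to `a` or to `b`, and every vertex on the left of `(a,b)` is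
incident to at least two interior edges of `U`. -/
def OmegaTilde (n : ℕ) (T : Triangulation n) (a b : Fin n) : Set (Triangulation n) :=
  {U | (∀ e ∈ T.edges, e ∈ U.edges → ¬ IsBoundary n e → a ∈ e ∨ b ∈ e) ∧
    ∀ c : Fin n, Between n a c b → 2 ≤ interiorDeg n U c}

/-- `(a,b,c)` is a clockwise-oriented central triangle of `T`: the oriented edges
`(a,b)`, `(b,c)` and `(c,a)` have length at most `n/2` and `{a,b}`, `{b,c}`, `{a,c}`
are edges of `T`. -/
def CentralTriangle (n : ℕ) (T : Triangulation n) (a b c : Fin n) : Prop :=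
  2 * (b - a).val ≤ n ∧ 2 * (c - b).val ≤ n ∧ 2 * (a - c).val ≤ n ∧
    ({a, b} : Finset (Fin n)) ∈ T.edges ∧ ({b, c} : Finset (Fin n)) ∈ T.edges ∧
    ({a, c} : Finset (Fin n)) ∈ T.edges

/-!
Deleting `x` merges the vertices `x` and `x + 1`, one of which is the last shelling vertex `M`.
Away from `M` the vertex map of the deletion is a bijection onto the vertices of the smaller
polygon that preserves the cyclic order, so it carries the shelling `a₁, …, a_{k-1}` of `T` at `v`
to a shelling of `T∖x` at `v`, and the interior edges of `U` witnessing the goodness of `aᵢ` to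
interior edges of `U∖x`. The only interior edge avoiding `M` that could become a boundary edge
is the diagonal `{M - 1, M + 1}`, and it is not in `U`: it crosses the interior edges of `U`
at `M`, which exist because `M` itself is good.
-/

lemma Finset.pair_eq_pair_iff {α : Type*} [DecidableEq α] {a b c d : α} :
    ({a, b} : Finset α) = {c, d} ↔ a = c ∧ b = d ∨ a = d ∧ b = c := by
  rw [← Finset.coe_inj, Finset.coe_pair, Finset.coe_pair, Set.pair_eq_pair_iff]

lemma Fin.val_sub_eq_ite {N : ℕ} (a b : Fin N) :
    (a - b).val = if b ≤ a then a.val - b.val else N + a.val - b.val := by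
  split_ifs with h
  · exact Fin.coe_sub_iff_le.2 h
  · exact Fin.coe_sub_iff_lt.2 (not_le.1 h)

lemma Fin.val_add_one_eq_ite {n : ℕ} (i : Fin (n + 1)) :
    (i + 1).val = if i.val = n then 0 else i.val + 1 := by
  simp [Fin.val_add_one, Fin.ext_iff]

lemma Fin.val_sub_one_eq_ite {n : ℕ} (i : Fin (n + 1)) :
    (i - 1).val = if i.val = 0 then n else i.val - 1 := by
  simp only [Fin.coe_sub_one, ← Fin.val_eq_zero_iff]

lemma between_iff_val {N : ℕ} (a c b : Fin N) :
    Between N a c b ↔ a.val < c.val ∧ c.val < b.val ∨ c.val < b.val ∧ b.val < a.val ∨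
      b.val < a.val ∧ a.val < c.val := by
  have := c.isLt
  simp only [Between, Fin.val_sub_eq_ite, Fin.le_def]
  split_ifs <;> omega

lemma cross_pair_iff {N : ℕ} {a b c d : Fin N} :
    Cross N {a, b} {c, d} ↔
      Between N a c b ∧ Between N b d a ∨ Between N a d b ∧ Between N b c a := by
  constructor
  · rintro ⟨p, q, r, s, he, hf, hr, hs⟩
    rw [Finset.pair_eq_pair_iff] at he hf
    rcases he with ⟨rfl, rfl⟩ | ⟨rfl, rfl⟩ <;> rcases hf with ⟨rfl, rfl⟩ | ⟨rfl, rfl⟩ <;> tauto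
  · rintro (⟨hc, hd⟩ | ⟨hd, hc⟩)
    · exact ⟨a, b, c, d, rfl, rfl, hc, hd⟩
    · exact ⟨a, b, d, c, rfl, Finset.pair_comm c d, hd, hc⟩

lemma nextV_eq_add_one {n : ℕ} (i : Fin (n + 1)) : nextV (n + 1) i = i + 1 := by
  ext
  rw [Fin.val_add_one_eq_ite, nextV]
  have := i.isLt
  split_ifs with h
  · simp [h]
  · exact Nat.mod_eq_of_lt (by omega)

lemma isBoundary_iff_exists_add_one {n : ℕ} {e : Finset (Fin (n + 1))} :
    IsBoundary (n + 1) e ↔ ∃ i, e = {i, i + 1} := by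
  simp only [IsBoundary, nextV_eq_add_one]

lemma isBoundary_pair_iff {n : ℕ} {p q : Fin (n + 1)} :
    IsBoundary (n + 1) {p, q} ↔ q = p + 1 ∨ p = q + 1 := by
  rw [isBoundary_iff_exists_add_one]
  constructor
  · rintro ⟨i, hi⟩
    rcases Finset.pair_eq_pair_iff.1 hi with ⟨rfl, rfl⟩ | ⟨rfl, rfl⟩ <;> tauto
  · rintro (rfl | rfl)
    · exact ⟨p, rfl⟩
    · exact ⟨q, Finset.pair_comm _ _⟩

lemma not_between_self_add_one {n : ℕ} (i c : Fin (n + 1)) : ¬ Between (n + 1) i c (i + 1) := by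
  rintro ⟨hpos, hlt⟩
  have : ((1 : Fin (n + 1))).val ≤ 1 := by simp [Nat.mod_le]
  rw [add_sub_cancel_left] at hlt
  omega

lemma IsBoundary.not_cross {n : ℕ} {e f : Finset (Fin (n + 1))} (he : IsBoundary (n + 1) e) :
    ¬ Cross (n + 1) e f := by
  obtain ⟨i, rfl⟩ := isBoundary_iff_exists_add_one.1 he
  rintro ⟨a, b, c, d, he, -, hc, hd⟩
  rcases Finset.pair_eq_pair_iff.1 he with ⟨rfl, rfl⟩ | ⟨rfl, rfl⟩
  · exact not_between_self_add_one _ _ hc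
  · exact not_between_self_add_one _ _ hd

lemma Triangulation.pair_add_one_mem {n : ℕ} (T : Triangulation (n + 2)) (i : Fin (n + 2)) :
    {i, i + 1} ∈ T.edges := by
  have hbd : IsBoundary (n + 2) {i, i + 1} := isBoundary_iff_exists_add_one.2 ⟨i, rfl⟩
  refine T.isTri.2.2.2 _ (Finset.subset_univ _) (Finset.card_pair ?_) fun _ _ => hbd.not_cross
  simp

/-- An interior edge at `M` crosses the diagonal cutting off the ear at `M`. -/
lemma Triangulation.pair_sub_one_add_one_not_mem {n : ℕ} (U : Triangulation (n + 2))
    {M w : Fin (n + 2)} (hw : w ≠ M) (hU : {M, w} ∈ U.edges)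
    (hint : ¬ IsBoundary (n + 2) {M, w}) : {M - 1, M + 1} ∉ U.edges := by
  intro hdiag
  have hw₁ : w ≠ M + 1 := fun h => hint (isBoundary_pair_iff.2 (Or.inl h))
  have hw₂ : w ≠ M - 1 := fun h => hint (isBoundary_pair_iff.2 (Or.inr (by simp [h])))
  refine U.isTri.2.2.1 _ hdiag _ hU ⟨M - 1, M + 1, M, w, rfl, rfl, ?_, ?_⟩ <;>
  · simp only [ne_eq, Fin.ext_iff, Fin.val_add_one_eq_ite, Fin.val_sub_one_eq_ite] at hw hw₁ hw₂
    rw [between_iff_val, Fin.val_add_one_eq_ite, Fin.val_sub_one_eq_ite]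
    have := w.isLt
    have := M.isLt
    split_ifs at hw₁ hw₂ ⊢ <;> omega

def deleteMap (n : ℕ) (x w : Fin (n + 2)) : Fin (n + 1) :=
  collapse n x (if w = x then x + 1 else w)

section deleteMap

variable {n : ℕ} {x M : Fin (n + 2)}

lemma deleteMap_of_ne {w : Fin (n + 2)} (hw : w ≠ x) : deleteMap n x w = collapse n x w := by
  rw [deleteMap, if_neg hw]

lemma val_deleteMap (w : Fin (n + 2)) :
    (deleteMap n x w).val =
      if w.val < x.val then w.val
      else if w.val = x.val then (if x.val = n + 1 then 0 else x.val) else w.val - 1 := by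
  have := x.isLt
  simp only [deleteMap, collapse, apply_ite Fin.val, Fin.val_add_one_eq_ite, Fin.ext_iff]
  split_ifs <;> omega

lemma deleteMap_eq_deleteMap_iff {u w : Fin (n + 2)} :
    deleteMap n x u = deleteMap n x w ↔ u = w ∨ u = x ∧ w = x + 1 ∨ u = x + 1 ∧ w = x := by
  have := u.isLt
  have := w.isLt
  simp only [Fin.ext_iff, val_deleteMap, Fin.val_add_one_eq_ite]
  split_ifs <;> omega

lemma deleteMap_add_one {p : Fin (n + 2)} (hp : p ≠ x) :
    deleteMap n x (p + 1) = deleteMap n x p + 1 := by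
  have := p.isLt
  have := x.isLt
  rw [ne_eq, Fin.ext_iff] at hp
  simp only [Fin.ext_iff, val_deleteMap, Fin.val_add_one_eq_ite]
  split_ifs <;> omega

lemma deleteMap_add_one_self : deleteMap n x (x + 1) = deleteMap n x x :=
  deleteMap_eq_deleteMap_iff.2 (Or.inr (Or.inr ⟨rfl, rfl⟩))

lemma deleteMap_injOn (hM : M = x ∨ M = x + 1) {u w : Fin (n + 2)} (hu : u ≠ M) (hw : w ≠ M)
    (h : deleteMap n x u = deleteMap n x w) : u = w := by
  rcases deleteMap_eq_deleteMap_iff.1 h with h | ⟨rfl, rfl⟩ | ⟨rfl, rfl⟩ <;> tauto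

lemma exists_deleteMap_eq (hM : M = x ∨ M = x + 1) (w : Fin (n + 1)) :
    ∃ u, u ≠ M ∧ deleteMap n x u = w := by
  have hcollapse : deleteMap n x (x.succAbove w) = w := by
    rw [deleteMap_of_ne (Fin.succAbove_ne x w)]
    ext
    simp only [collapse, Fin.succAbove, Fin.lt_def, apply_ite Fin.val, Fin.val_castSucc,
      Fin.val_succ]
    split_ifs <;> omega
  by_cases hM' : x.succAbove w = M
  · refine ⟨x, fun h => Fin.succAbove_ne x w (hM'.trans h.symm), ?_⟩
    rcases hM with rfl | rfl
    · exact absurd hM' (Fin.succAbove_ne _ w)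
    · rw [← deleteMap_add_one_self, ← hM', hcollapse]
  · exact ⟨_, hM', hcollapse⟩

lemma between_deleteMap (hM : M = x ∨ M = x + 1) {a b c : Fin (n + 2)} (ha : a ≠ M)
    (hb : b ≠ M) (hc : c ≠ M) (h : Between (n + 2) a c b) :
    Between (n + 1) (deleteMap n x a) (deleteMap n x c) (deleteMap n x b) := by
  have := a.isLt
  have := b.isLt
  have := c.isLt
  have := x.isLt
  simp only [Fin.ext_iff, Fin.val_add_one_eq_ite] at hM
  simp only [ne_eq, Fin.ext_iff] at ha hb hc
  rw [between_iff_val] at h ⊢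
  simp only [val_deleteMap]
  split_ifs at hM ⊢ <;> omega

lemma cross_deleteMap (hM : M = x ∨ M = x + 1) {p q r s : Fin (n + 2)} (hp : p ≠ M)
    (hq : q ≠ M) (hr : r ≠ M) (hs : s ≠ M) (h : Cross (n + 2) {p, q} {r, s}) :
    Cross (n + 1) {deleteMap n x p, deleteMap n x q} {deleteMap n x r, deleteMap n x s} := by
  rw [cross_pair_iff] at h ⊢
  rcases h with ⟨h₁, h₂⟩ | ⟨h₁, h₂⟩
  · exact Or.inl ⟨between_deleteMap hM hp hq hr h₁, between_deleteMap hM hq hp hs h₂⟩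
  · exact Or.inr ⟨between_deleteMap hM hp hq hs h₁, between_deleteMap hM hq hp hr h₂⟩

lemma isBoundary_image_deleteMap {e : Finset (Fin (n + 2))} (he : IsBoundary (n + 2) e)
    (hex : e ≠ {x, x + 1}) : IsBoundary (n + 1) (e.image (deleteMap n x)) := by
  obtain ⟨p, rfl⟩ := isBoundary_iff_exists_add_one.1 he
  have hp : p ≠ x := by rintro rfl; exact hex rfl
  rw [Finset.image_insert, Finset.image_singleton, deleteMap_add_one hp]
  exact isBoundary_iff_exists_add_one.2 ⟨_, rfl⟩

lemma add_one_or_eq_of_deleteMap_eq_add_one (hM : M = x ∨ M = x + 1) {p q : Fin (n + 2)}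
    (hp : p ≠ M) (hq : q ≠ M) (hpq : p ≠ q) (h : deleteMap n x q = deleteMap n x p + 1) :
    q = p + 1 ∨ p = M - 1 ∧ q = M + 1 := by
  by_cases hpx : p = x
  · subst hpx
    have hx₁ : p + 1 ≠ p := by simp
    rw [← deleteMap_add_one_self, ← deleteMap_add_one hx₁, deleteMap_eq_deleteMap_iff] at h
    rcases h with rfl | ⟨rfl, -⟩ | ⟨rfl, -⟩
    · rcases hM with rfl | rfl
      · exact absurd rfl hp
      · exact Or.inr ⟨by simp, rfl⟩
    · exact absurd rfl hpq
    · exact Or.inl rfl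
  · rw [← deleteMap_add_one hpx, deleteMap_eq_deleteMap_iff] at h
    rcases h with rfl | ⟨rfl, h⟩ | ⟨rfl, h⟩
    · exact Or.inl rfl
    · exact absurd (add_right_cancel h) hpx
    · rcases hM with rfl | rfl
      · exact Or.inr ⟨by simp [← h], rfl⟩
      · exact absurd rfl hq

lemma isBoundary_or_eq_of_isBoundary_deleteMap (hM : M = x ∨ M = x + 1) {p q : Fin (n + 2)}
    (hp : p ≠ M) (hq : q ≠ M) (hpq : p ≠ q)
    (h : IsBoundary (n + 1) {deleteMap n x p, deleteMap n x q}) :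
    IsBoundary (n + 2) {p, q} ∨ ({p, q} : Finset (Fin (n + 2))) = {M - 1, M + 1} := by
  rw [isBoundary_pair_iff]
  rcases isBoundary_pair_iff.1 h with h | h
  · rcases add_one_or_eq_of_deleteMap_eq_add_one hM hp hq hpq h with h | ⟨rfl, rfl⟩ <;> tauto
  · rcases add_one_or_eq_of_deleteMap_eq_add_one hM hq hp hpq.symm h with h | ⟨rfl, rfl⟩
    · tauto
    · exact Or.inr (Finset.pair_comm _ _)

lemma mem_deleteEdges {E : Finset (Finset (Fin (n + 2)))} {e' : Finset (Fin (n + 1))} :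
    e' ∈ deleteEdges n x E ↔ ∃ e ∈ E, e ≠ {x, x + 1} ∧ e.image (deleteMap n x) = e' := by
  simp only [deleteEdges, Finset.mem_image, Finset.mem_erase, and_comm (a := _ ≠ _), and_assoc]
  rfl

lemma pair_mem_deleteEdges (hM : M = x ∨ M = x + 1) {E : Finset (Finset (Fin (n + 2)))}
    {p q : Fin (n + 2)} (hp : p ≠ M) (hq : q ≠ M) (h : {p, q} ∈ E) :
    {deleteMap n x p, deleteMap n x q} ∈ deleteEdges n x E := by
  refine mem_deleteEdges.2 ⟨_, h, ?_, by simp only [Finset.image_insert, Finset.image_singleton]⟩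
  intro hpq
  have hM' : M ∈ ({p, q} : Finset _) := by rw [hpq]; rcases hM with rfl | rfl <;> simp
  simp only [Finset.mem_insert, Finset.mem_singleton] at hM'
  rcases hM' with rfl | rfl <;> contradiction

lemma Triangulation.pair_mem_deleteEdges_iff (T : Triangulation (n + 2))
    (hM : M = x ∨ M = x + 1) {v u : Fin (n + 2)} (hvx : v ≠ x) (hvx₁ : v ≠ x + 1)
    (hvM : {v, M} ∉ T.edges) (hu : u ≠ M) (huv : u ≠ v) :
    {deleteMap n x v, deleteMap n x u} ∈ deleteEdges n x T.edges ↔ {v, u} ∈ T.edges := by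
  have hvM' : v ≠ M := by rcases hM with rfl | rfl <;> assumption
  refine ⟨fun h => ?_, pair_mem_deleteEdges hM hvM' hu⟩
  obtain ⟨e, he, -, himg⟩ := mem_deleteEdges.1 h
  obtain ⟨p, hp, hpv⟩ := Finset.mem_image.1 (himg ▸ Finset.mem_insert_self _ _)
  obtain ⟨q, hq, hqu⟩ := Finset.mem_image.1 (himg ▸ Finset.mem_insert_of_mem
    (Finset.mem_singleton_self (deleteMap n x u)))
  obtain rfl : p = v := by
    rcases deleteMap_eq_deleteMap_iff.1 hpv with h | ⟨-, h⟩ | ⟨-, h⟩ <;> tauto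
  have hq' : q = u ∨ q = M := by
    by_cases hqM : q = M
    · exact Or.inr hqM
    · exact Or.inl (deleteMap_injOn hM hqM hu hqu)
  have hpq : p ≠ q := by rcases hq' with rfl | rfl <;> tauto
  have he' : e = {p, q} := (Finset.eq_of_subset_of_card_le
    (Finset.insert_subset hp (Finset.singleton_subset_iff.2 hq))
    (by rw [T.isTri.2.1 e he, Finset.card_pair hpq])).symm
  rcases hq' with rfl | rfl
  · exact he' ▸ he
  · exact absurd (he' ▸ he) hvM

end deleteMap

lemma Finset.exists_eq_pair_of_mem_of_card_eq_two {α : Type*} [DecidableEq α] {e : Finset α}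
    (hcard : e.card = 2) {w : α} (hw : w ∈ e) : ∃ u, u ≠ w ∧ e = {w, u} := by
  obtain ⟨p, q, hpq, rfl⟩ := Finset.card_eq_two.1 hcard
  simp only [Finset.mem_insert, Finset.mem_singleton] at hw
  rcases hw with rfl | rfl
  · exact ⟨q, hpq.symm, rfl⟩
  · exact ⟨p, hpq, Finset.pair_comm _ _⟩

def IsGoodNeighbor (N k : ℕ) (U : Triangulation N) (a : Fin k → Fin N) (i : Fin k)
    (w : Fin N) : Prop :=
  {a i, w} ∈ U.edges ∧ ¬ IsBoundary N {a i, w} ∧ ∀ j, i ≤ j → w ≠ a j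

lemma goodAt_iff_exists_isGoodNeighbor {N k : ℕ} {U : Triangulation N} {a : Fin k → Fin N}
    {i : Fin k} :
    GoodAt N k U a i ↔ ∃ w₁ w₂, w₁ ≠ w₂ ∧ IsGoodNeighbor N k U a i w₁ ∧
      IsGoodNeighbor N k U a i w₂ := by
  constructor
  · rintro ⟨e₁, e₂, he₁, he₂, hne, hb₁, hb₂, hm₁, hm₂, hc₁, hc₂⟩
    obtain ⟨w₁, hw₁, rfl⟩ := Finset.exists_eq_pair_of_mem_of_card_eq_two (U.isTri.2.1 _ he₁) hm₁
    obtain ⟨w₂, hw₂, rfl⟩ := Finset.exists_eq_pair_of_mem_of_card_eq_two (U.isTri.2.1 _ he₂) hm₂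
    refine ⟨w₁, w₂, by rintro rfl; exact hne rfl, ⟨he₁, hb₁, hc₁ w₁ (by simp) hw₁⟩,
      ⟨he₂, hb₂, hc₂ w₂ (by simp) hw₂⟩⟩
  · rintro ⟨w₁, w₂, hne, ⟨he₁, hb₁, hc₁⟩, ⟨he₂, hb₂, hc₂⟩⟩
    have hw₁ := hc₁ i le_rfl
    refine ⟨_, _, he₁, he₂, fun h => ?_, hb₁, hb₂, by simp, by simp, ?_, ?_⟩
    · rcases Finset.pair_eq_pair_iff.1 h with ⟨-, h⟩ | ⟨-, h⟩
      exacts [hne h, hw₁ h]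
    all_goals
      intro w hw hwa
      obtain rfl : w = _ := (Finset.mem_insert.1 hw).resolve_left hwa |> Finset.mem_singleton.1
      assumption

lemma Triangulation.ne_and_ne_of_pair_not_mem {n : ℕ} (T : Triangulation (n + 2))
    {x M v : Fin (n + 2)} (hM : M = x ∨ M = x + 1) (hvM : v ≠ M) (h : {v, M} ∉ T.edges) :
    v ≠ x ∧ v ≠ x + 1 := by
  rcases hM with rfl | rfl
  · refine ⟨hvM, fun hv => h ?_⟩
    rw [hv, Finset.pair_comm]
    exact T.pair_add_one_mem M
  · exact ⟨fun hv => h (hv ▸ T.pair_add_one_mem x), hvM⟩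

lemma hasEar_deleteEdges {n : ℕ} {U : Triangulation (n + 2)} {U' : Triangulation (n + 1)}
    {x v : Fin (n + 2)} (hU' : U'.edges = deleteEdges n x U.edges) (hvx : v ≠ x)
    (hvx₁ : v ≠ x + 1) (h : HasEar (n + 2) U v) : HasEar (n + 1) U' (deleteMap n x v) := by
  intro e' he' hint hv
  rw [hU'] at he'
  obtain ⟨e, he, hex, rfl⟩ := mem_deleteEdges.1 he'
  obtain ⟨w, hw, hwv⟩ := Finset.mem_image.1 hv
  obtain rfl : w = v := by
    rcases deleteMap_eq_deleteMap_iff.1 hwv with h | ⟨-, h⟩ | ⟨-, h⟩ <;> tauto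
  exact hint (isBoundary_image_deleteMap (not_not.1 fun hb => h e he hb hw) hex)

section shelling

variable {n m : ℕ} {T U : Triangulation (n + 2)} {T' U' : Triangulation (n + 1)}
  {x v : Fin (n + 2)} {a : Fin (m + 1) → Fin (n + 2)}

lemma forall_ne_deleteMap_iff (hinj : Function.Injective a)
    (hM : a (Fin.last m) = x ∨ a (Fin.last m) = x + 1) {u : Fin (n + 2)}
    (hu : u ≠ a (Fin.last m)) (i : Fin m) :
    (∀ j, i ≤ j → deleteMap n x u ≠ deleteMap n x (a j.castSucc)) ↔
      ∀ j, i.castSucc ≤ j → u ≠ a j := by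
  constructor
  · intro h j hj
    rcases Fin.eq_castSucc_or_eq_last j with ⟨j, rfl⟩ | rfl
    · exact fun hu' => h j (Fin.castSucc_le_castSucc_iff.1 hj) (hu' ▸ rfl)
    · exact hu
  · intro h j hj hu'
    exact h j.castSucc (Fin.castSucc_le_castSucc_iff.2 hj)
      (deleteMap_injOn hM hu (hinj.ne (Fin.castSucc_ne_last j)) hu')

lemma range_deleteMap_shelling_iff (hinj : Function.Injective a)
    (hM : a (Fin.last m) = x ∨ a (Fin.last m) = x + 1)
    (hT' : T'.edges = deleteEdges n x T.edges) (hvx : v ≠ x) (hvx₁ : v ≠ x + 1)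
    (hrange : ∀ w, (∃ i, a i = w) ↔ w ≠ v ∧ {v, w} ∉ T.edges) (w : Fin (n + 1)) :
    (∃ i : Fin m, deleteMap n x (a i.castSucc) = w) ↔
      w ≠ deleteMap n x v ∧ {deleteMap n x v, w} ∉ T'.edges := by
  obtain ⟨u, huM, rfl⟩ := exists_deleteMap_eq hM w
  have hvM : v ≠ a (Fin.last m) := by rcases hM with h | h <;> rw [h] <;> assumption
  have hT'mem := T.pair_mem_deleteEdges_iff hM hvx hvx₁ ((hrange _).1 ⟨_, rfl⟩).2 huM
  rw [← hT'] at hT'mem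
  constructor
  · rintro ⟨i, hi⟩
    obtain rfl := deleteMap_injOn hM (hinj.ne (Fin.castSucc_ne_last i)) huM hi
    obtain ⟨hav, havT⟩ := (hrange _).1 ⟨_, rfl⟩
    exact ⟨fun h => hav (deleteMap_injOn hM huM hvM h), fun h => havT ((hT'mem hav).1 h)⟩
  · rintro ⟨hne, hnmem⟩
    have huv : u ≠ v := by rintro rfl; exact hne rfl
    obtain ⟨j, rfl⟩ := (hrange u).2 ⟨huv, fun h => hnmem ((hT'mem huv).2 h)⟩
    rcases Fin.eq_castSucc_or_eq_last j with ⟨i, rfl⟩ | rfl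
    · exact ⟨i, rfl⟩
    · exact absurd rfl huM

open Classical in
lemma pair_mem_filter_deleteEdges (hinj : Function.Injective a)
    (hM : a (Fin.last m) = x ∨ a (Fin.last m) = x + 1)
    (hT' : T'.edges = deleteEdges n x T.edges) {i : Fin m} {c d : Fin (n + 2)}
    (h : {c, d} ∈ T.edges.filter fun e => ∀ j, i.castSucc ≤ j → a j ∉ e) :
    c ≠ a (Fin.last m) ∧ d ≠ a (Fin.last m) ∧
      {deleteMap n x c, deleteMap n x d} ∈
        T'.edges.filter fun e => ∀ j, i ≤ j → deleteMap n x (a j.castSucc) ∉ e := by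
  obtain ⟨hT, hlater⟩ := Finset.mem_filter.1 h
  have hcd : ∀ j, i.castSucc ≤ j → c ≠ a j ∧ d ≠ a j := fun j hj => by
    simpa only [Finset.mem_insert, Finset.mem_singleton, not_or, eq_comm] using hlater j hj
  have hc := (hcd _ (Fin.le_last _)).1
  have hd := (hcd _ (Fin.le_last _)).2
  refine ⟨hc, hd, Finset.mem_filter.2 ⟨hT' ▸ pair_mem_deleteEdges hM hc hd hT, ?_⟩⟩
  intro j hj hmem
  simp only [Finset.mem_insert, Finset.mem_singleton] at hmem
  rcases hmem with h | h
  · exact (forall_ne_deleteMap_iff hinj hM hc i).2 (fun j hj => (hcd j hj).1) j hj h.symm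
  · exact (forall_ne_deleteMap_iff hinj hM hd i).2 (fun j hj => (hcd j hj).2) j hj h.symm

open Classical in
lemma isTriangulationOn_deleteEdges (hinj : Function.Injective a)
    (hM : a (Fin.last m) = x ∨ a (Fin.last m) = x + 1)
    (hT' : T'.edges = deleteEdges n x T.edges) (i : Fin m)
    (htri : IsTriangulationOn (n + 2) (Finset.univ.filter fun w => ∀ j, i.castSucc ≤ j → w ≠ a j)
      (T.edges.filter fun e => ∀ j, i.castSucc ≤ j → a j ∉ e)) :
    IsTriangulationOn (n + 1)
      (Finset.univ.filter fun w => ∀ j, i ≤ j → w ≠ deleteMap n x (a j.castSucc))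
      (T'.edges.filter fun e => ∀ j, i ≤ j → deleteMap n x (a j.castSucc) ∉ e) := by
  refine ⟨fun e he w hw => ?_, fun e he => T'.isTri.2.1 e (Finset.mem_filter.1 he).1,
    fun e he f hf => T'.isTri.2.2.1 e (Finset.mem_filter.1 he).1 f (Finset.mem_filter.1 hf).1,
    fun e hW hcard hnc => ?_⟩
  · simp only [Finset.mem_filter, Finset.mem_univ, true_and] at he ⊢
    exact fun j hj hwj => he.2 j hj (hwj ▸ hw)
  obtain ⟨w₁, w₂, hw, rfl⟩ := Finset.card_eq_two.1 hcard
  obtain ⟨u₁, hu₁, rfl⟩ := exists_deleteMap_eq hM w₁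
  obtain ⟨u₂, hu₂, rfl⟩ := exists_deleteMap_eq hM w₂
  simp only [Finset.insert_subset_iff, Finset.singleton_subset_iff, Finset.mem_filter,
    Finset.mem_univ, true_and] at hW
  have hnc' : ∀ f ∈ T.edges.filter fun e => ∀ j, i.castSucc ≤ j → a j ∉ e,
      ¬ Cross (n + 2) {u₁, u₂} f := by
    intro f hf hcr
    obtain ⟨c, d, -, rfl⟩ := Finset.card_eq_two.1 (T.isTri.2.1 _ (Finset.mem_filter.1 hf).1)
    obtain ⟨hc, hd, hf'⟩ := pair_mem_filter_deleteEdges hinj hM hT' hf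
    exact hnc _ hf' (cross_deleteMap hM hu₁ hu₂ hc hd hcr)
  have hmem := htri.2.2.2 {u₁, u₂}
    (by simp only [Finset.insert_subset_iff, Finset.singleton_subset_iff, Finset.mem_filter,
      Finset.mem_univ, true_and, ← forall_ne_deleteMap_iff hinj hM hu₁,
      ← forall_ne_deleteMap_iff hinj hM hu₂]; exact hW)
    (Finset.card_pair fun h => hw (h ▸ rfl)) hnc'
  exact (pair_mem_filter_deleteEdges hinj hM hT' hmem).2.2

lemma isShelling_deleteEdges (hM : a (Fin.last m) = x ∨ a (Fin.last m) = x + 1)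
    (hT' : T'.edges = deleteEdges n x T.edges) (hvx : v ≠ x) (hvx₁ : v ≠ x + 1)
    (h : IsShelling (n + 2) (m + 1) T v a) :
    IsShelling (n + 1) m T' (deleteMap n x v) (deleteMap n x ∘ a ∘ Fin.castSucc) := by
  obtain ⟨hinj, hrange, htri⟩ := h
  refine ⟨fun i j hij => Fin.castSucc_injective _ (hinj ?_),
    range_deleteMap_shelling_iff hinj hM hT' hvx hvx₁ hrange,
    fun i => isTriangulationOn_deleteEdges hinj hM hT' i (htri i.castSucc)⟩
  exact deleteMap_injOn hM (hinj.ne (Fin.castSucc_ne_last i))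
    (hinj.ne (Fin.castSucc_ne_last j)) hij

lemma IsGoodNeighbor.deleteMap (hinj : Function.Injective a)
    (hM : a (Fin.last m) = x ∨ a (Fin.last m) = x + 1)
    (hU' : U'.edges = deleteEdges n x U.edges)
    (hdiag : {a (Fin.last m) - 1, a (Fin.last m) + 1} ∉ U.edges) {i : Fin m} {w : Fin (n + 2)}
    (h : IsGoodNeighbor (n + 2) (m + 1) U a i.castSucc w) :
    w ≠ a (Fin.last m) ∧
      IsGoodNeighbor (n + 1) m U' (deleteMap n x ∘ a ∘ Fin.castSucc) i (deleteMap n x w) := by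
  obtain ⟨hmem, hint, hlater⟩ := h
  have hwM : w ≠ a (Fin.last m) := hlater _ (Fin.le_last _)
  have haM : a i.castSucc ≠ a (Fin.last m) := hinj.ne (Fin.castSucc_ne_last i)
  refine ⟨hwM, hU' ▸ pair_mem_deleteEdges hM haM hwM hmem, fun hb => ?_,
    (forall_ne_deleteMap_iff hinj hM hwM i).2 hlater⟩
  rcases isBoundary_or_eq_of_isBoundary_deleteMap hM haM hwM (hlater _ le_rfl).symm hb with h | h
  exacts [hint h, hdiag (h ▸ hmem)]

lemma goodAt_deleteEdges (hinj : Function.Injective a)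
    (hM : a (Fin.last m) = x ∨ a (Fin.last m) = x + 1)
    (hU' : U'.edges = deleteEdges n x U.edges) (hlast : GoodAt (n + 2) (m + 1) U a (Fin.last m))
    (i : Fin m) (h : GoodAt (n + 2) (m + 1) U a i.castSucc) :
    GoodAt (n + 1) m U' (deleteMap n x ∘ a ∘ Fin.castSucc) i := by
  have hdiag : {a (Fin.last m) - 1, a (Fin.last m) + 1} ∉ U.edges := by
    obtain ⟨w, -, -, ⟨hmem, hint, hlater⟩, -⟩ := goodAt_iff_exists_isGoodNeighbor.1 hlast
    exact U.pair_sub_one_add_one_not_mem (hlater _ le_rfl) hmem hint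
  obtain ⟨w₁, w₂, hne, h₁, h₂⟩ := goodAt_iff_exists_isGoodNeighbor.1 h
  obtain ⟨hw₁, h₁⟩ := h₁.deleteMap hinj hM hU' hdiag
  obtain ⟨hw₂, h₂⟩ := h₂.deleteMap hinj hM hU' hdiag
  exact goodAt_iff_exists_isGoodNeighbor.2
    ⟨_, _, fun h => hne (deleteMap_injOn hM hw₁ hw₂ h), h₁, h₂⟩

end shelling

/-- Let `v` be incident to exactly `n-3-k` interior edges of `T`, let
`U ∈ Ω(T,v)` and let `a` be a shelling of `T` at `v` witnessing it. If `x` is the last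
vertex of the shelling or the vertex immediately preceding it clockwise, then
`U∖x ∈ Ω(T∖x, v)`. -/
theorem stmt3 (n k : ℕ) (hk : 0 < k)
    (T : Triangulation (n + 2)) (v : Fin (n + 2))
    (U : Triangulation (n + 2)) (hUmem : U ∈ Omega (n + 2) k T v)
    (a : Fin k → Fin (n + 2)) (hshell : IsShelling (n + 2) k T v a)
    (hgood : ∀ i : Fin k, GoodAt (n + 2) k U a i)
    (x : Fin (n + 2))
    (hx : x = a ⟨k - 1, by omega⟩ ∨ x = a ⟨k - 1, by omega⟩ - 1)
    (T' U' : Triangulation (n + 1))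
    (hT' : T'.edges = deleteEdges n x T.edges)
    (hU' : U'.edges = deleteEdges n x U.edges) :
    U' ∈ Omega (n + 1) (k - 1) T' (collapse n x v) := by
  obtain ⟨m, rfl⟩ : ∃ m, k = m + 1 := ⟨k - 1, by omega⟩
  have hM : a (Fin.last m) = x ∨ a (Fin.last m) = x + 1 := by
    rcases hx with rfl | rfl
    exacts [Or.inl rfl, Or.inr (sub_add_cancel _ _).symm]
  obtain ⟨hvM, hvMT⟩ := (hshell.2.1 _).1 ⟨Fin.last m, rfl⟩
  obtain ⟨hvx, hvx₁⟩ := T.ne_and_ne_of_pair_not_mem hM hvM.symm hvMT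
  rw [← deleteMap_of_ne hvx]
  exact ⟨hasEar_deleteEdges hU' hvx hvx₁ hUmem.1, _, isShelling_deleteEdges hM hT' hvx hvx₁ hshell,
    fun i => goodAt_deleteEdges hshell.1 hM hU' (hgood _) i (hgood _)⟩
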